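/- arXiv:0801.2456 — 4 statements merged into one kernel-verified Lean document; each statement's English description precedes it below -/
import Mathlib

section
/- Let Λ be a nonempty class of probability mass functions on ℕ+ and n ≥ 1. Define the maximal likelihood p̂(x) = sup_{P ∈ Λ} P^n(x) for x ∈ ℕ+^n. Then the minimax regret R*(Λ^n) is finite if and only if S_n := Σ_{x ∈ ℕ+^n} p̂(x) is finite, and in that case R*(Λ^n) = log S_n (the normalized maximum likelihood coding probability Q^n_NML(x) = p̂(x)/S_n achieves this value). -/
open scoped ENNReal BigOperators

noncomputable section

/-- `p` is a probability mass function on `α`. -/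
def IsPmf {α : Type*} (p : α → ℝ) : Prop := (∀ a, 0 ≤ p a) ∧ HasSum p 1

/-- The `n`-fold product probability mass function. -/
def prodPmf {α : Type*} (p : α → ℝ) (n : ℕ) : (Fin n → α) → ℝ :=
  fun x => ∏ i, p (x i)

/-- base-2 logarithm of the ratio `a / b`, valued in `[0,∞]`:
it is `⊤` when `b = 0 < a`, and clipped at `0` from below (which does not affect
the suprema defining minimax regret, which are always nonnegative). -/
def regretTerm (a b : ℝ) : ℝ≥0∞ :=
  if a ≤ 0 then 0 else if b ≤ 0 then ⊤ else ENNReal.ofReal (Real.logb 2 (a / b))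

/-- Minimax regret (base 2) of the class `Λ` for word length `n`, valued in `[0,∞]`. -/
def minimaxRegret {α : Type*} (Λ : Set (α → ℝ)) (n : ℕ) : ℝ≥0∞ :=
  ⨅ (Q : (Fin n → α) → ℝ) (_ : IsPmf Q),
    ⨆ (x : Fin n → α), ⨆ P ∈ Λ, regretTerm (prodPmf P n x) (Q x)

/- Kullback-Leibler divergence `D(p‖q)` in base 2, valued in `[0,∞]`.
It is `⊤` unless `q` dominates `p`; otherwise it is computed through the
pointwise-nonnegative decomposition `p log(p/q) + q - p` (summing to
`Σ p log(p/q)` since `Σ p = Σ q = 1`), converted from nats to bits. -/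
open Classical in
def klDiv2 {α : Type*} (p q : α → ℝ) : ℝ≥0∞ :=
  if ∃ a, q a = 0 ∧ 0 < p a then ⊤
  else (∑' a, ENNReal.ofReal (p a * Real.log (p a / q a) + q a - p a)) /
       ENNReal.ofReal (Real.log 2)

/-- Minimax redundancy (base 2) of the class `Λ` for word length `n`, valued in `[0,∞]`. -/
def minimaxRedundancy {α : Type*} (Λ : Set (α → ℝ)) (n : ℕ) : ℝ≥0∞ :=
  ⨅ (Q : (Fin n → α) → ℝ) (_ : IsPmf Q), ⨆ P ∈ Λ, klDiv2 (prodPmf P n) Q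

/-- The envelope class defined by the envelope function `f`. -/
def envClass (f : ℕ+ → ℝ) : Set (ℕ+ → ℝ) := {P | IsPmf P ∧ ∀ k, P k ≤ f k}

/-!
Shtarkov's argument. Write `p̂(x) = sup_{P ∈ Λ} P^n(x)` and `S = Σ_x p̂(x)`.
A coding distribution `Q` has worst-case regret at most `r` exactly when `p̂ ≤ 2^r Q` pointwise;
summing over `x` gives `S ≤ 2^r`, so every `Q` has regret at least `log S`. Conversely, when `S`
is finite and positive, the normalized maximum likelihood `Q = p̂ / S` satisfies `p̂ = S · Q` and
so attains regret `log S`; if `S = 0`, every `Q` has regret `0`.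
-/

open Real

lemma regretTerm_le_ofReal_logb {a b c : ℝ} (hc : 0 < c) (h : a ≤ c * b) :
    regretTerm a b ≤ ENNReal.ofReal (logb 2 c) := by
  unfold regretTerm
  split_ifs with ha hb
  · exact zero_le
  · nlinarith
  · push Not at ha hb
    refine ENNReal.ofReal_le_ofReal (logb_le_logb_of_le one_lt_two (div_pos ha hb) ?_)
    rwa [div_le_iff₀ hb]

lemma ofReal_le_of_regretTerm_le {a b : ℝ} {r : ℝ≥0∞} (hr : r ≠ ⊤)
    (h : regretTerm a b ≤ r) :
    ENNReal.ofReal a ≤ ENNReal.ofReal (2 ^ r.toReal * b) := by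
  unfold regretTerm at h
  split_ifs at h with ha hb
  · simp [ENNReal.ofReal_of_nonpos ha]
  · exact absurd (top_le_iff.1 h) hr
  · push Not at ha hb
    refine ENNReal.ofReal_le_ofReal ?_
    rw [← div_le_iff₀ hb, ← logb_le_iff_le_rpow one_lt_two (div_pos ha hb)]
    exact (ENNReal.ofReal_le_iff_le_toReal hr).1 h

lemma IsPmf.tsum_ofReal {X : Type*} {Q : X → ℝ} (hQ : IsPmf Q) :
    ∑' x, ENNReal.ofReal (Q x) = 1 := by
  rw [← ENNReal.ofReal_tsum_of_nonneg hQ.1 hQ.2.summable, hQ.2.tsum_eq, ENNReal.ofReal_one]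

lemma isPmf_pi_single_one {X : Type*} [DecidableEq X] (x₀ : X) :
    IsPmf (Pi.single x₀ (1 : ℝ)) :=
  ⟨fun x => by by_cases h : x = x₀ <;> simp [h], hasSum_pi_single x₀ 1⟩

section Shtarkov

variable {X β : Type*} (Λ : Set β) (ℓ : β → X → ℝ)

def maxLikelihood (x : X) : ℝ≥0∞ := ⨆ P ∈ Λ, ENNReal.ofReal (ℓ P x)

def worstCaseRegret (Q : X → ℝ) : ℝ≥0∞ := ⨆ x, ⨆ P ∈ Λ, regretTerm (ℓ P x) (Q x)

def normalizedMaxLikelihood (x : X) : ℝ :=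
  (maxLikelihood Λ ℓ x).toReal / (∑' y, maxLikelihood Λ ℓ y).toReal

variable {Λ ℓ}

lemma ofReal_le_maxLikelihood {P : β} (hP : P ∈ Λ) (x : X) :
    ENNReal.ofReal (ℓ P x) ≤ maxLikelihood Λ ℓ x :=
  le_iSup₂ (f := fun P (_ : P ∈ Λ) => ENNReal.ofReal (ℓ P x)) P hP

lemma worstCaseRegret_le_iff {Q : X → ℝ} {r : ℝ≥0∞} :
    worstCaseRegret Λ ℓ Q ≤ r ↔ ∀ x, ∀ P ∈ Λ, regretTerm (ℓ P x) (Q x) ≤ r := by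
  simp only [worstCaseRegret, iSup_le_iff]

lemma tsum_maxLikelihood_le {Q : X → ℝ} (hQ : IsPmf Q) {r : ℝ≥0∞} (hr : r ≠ ⊤)
    (h : worstCaseRegret Λ ℓ Q ≤ r) :
    ∑' x, maxLikelihood Λ ℓ x ≤ ENNReal.ofReal (2 ^ r.toReal) := by
  have hpoint :
      ∀ x, maxLikelihood Λ ℓ x ≤ ENNReal.ofReal (2 ^ r.toReal) * ENNReal.ofReal (Q x) :=
    fun x => iSup₂_le fun P hP => by
      rw [← ENNReal.ofReal_mul (by positivity)]
      exact ofReal_le_of_regretTerm_le hr (worstCaseRegret_le_iff.1 h x P hP)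
  calc ∑' x, maxLikelihood Λ ℓ x
      ≤ ∑' x, ENNReal.ofReal (2 ^ r.toReal) * ENNReal.ofReal (Q x) :=
        ENNReal.tsum_le_tsum hpoint
    _ = ENNReal.ofReal (2 ^ r.toReal) := by rw [ENNReal.tsum_mul_left, hQ.tsum_ofReal, mul_one]

lemma tsum_maxLikelihood_ne_top {Q : X → ℝ} (hQ : IsPmf Q)
    (h : worstCaseRegret Λ ℓ Q ≠ ⊤) :
    ∑' x, maxLikelihood Λ ℓ x ≠ ⊤ :=
  ne_top_of_le_ne_top ENNReal.ofReal_ne_top (tsum_maxLikelihood_le hQ h le_rfl)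

lemma ofReal_logb_tsum_maxLikelihood_le {Q : X → ℝ} (hQ : IsPmf Q) :
    ENNReal.ofReal (logb 2 (∑' x, maxLikelihood Λ ℓ x).toReal) ≤
      worstCaseRegret Λ ℓ Q := by
  set r := worstCaseRegret Λ ℓ Q
  rcases eq_or_ne r ⊤ with hr | hr
  · exact hr ▸ le_top
  have hS := tsum_maxLikelihood_le hQ hr le_rfl
  have hlogb : logb 2 (∑' x, maxLikelihood Λ ℓ x).toReal ≤ r.toReal := by
    rcases ENNReal.toReal_nonneg.eq_or_lt with h0 | hpos
    · rw [← h0, logb_zero]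
      exact ENNReal.toReal_nonneg
    · rw [logb_le_iff_le_rpow one_lt_two hpos]
      exact ENNReal.toReal_le_of_le_ofReal (by positivity) hS
  exact (ENNReal.ofReal_le_ofReal hlogb).trans ENNReal.ofReal_toReal_le

lemma isPmf_normalizedMaxLikelihood (hS : ∑' x, maxLikelihood Λ ℓ x ≠ ⊤)
    (hS₀ : ∑' x, maxLikelihood Λ ℓ x ≠ 0) :
    IsPmf (normalizedMaxLikelihood Λ ℓ) := by
  have hpos : 0 < (∑' x, maxLikelihood Λ ℓ x).toReal := ENNReal.toReal_pos hS₀ hS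
  refine ⟨fun x => div_nonneg ENNReal.toReal_nonneg hpos.le, ?_⟩
  have hsum :
      HasSum (fun x => (maxLikelihood Λ ℓ x).toReal) (∑' x, maxLikelihood Λ ℓ x).toReal := by
    rw [ENNReal.tsum_toReal_eq (fun x => ne_top_of_le_ne_top hS (ENNReal.le_tsum x))]
    exact (ENNReal.summable_toReal hS).hasSum
  rw [← div_self hpos.ne']
  exact hsum.div_const _

lemma worstCaseRegret_normalizedMaxLikelihood_le (hS : ∑' x, maxLikelihood Λ ℓ x ≠ ⊤)
    (hS₀ : ∑' x, maxLikelihood Λ ℓ x ≠ 0) :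
    worstCaseRegret Λ ℓ (normalizedMaxLikelihood Λ ℓ) ≤
      ENNReal.ofReal (logb 2 (∑' x, maxLikelihood Λ ℓ x).toReal) := by
  have hpos : 0 < (∑' x, maxLikelihood Λ ℓ x).toReal := ENNReal.toReal_pos hS₀ hS
  refine worstCaseRegret_le_iff.2 fun x P hP => regretTerm_le_ofReal_logb hpos ?_
  rw [normalizedMaxLikelihood, mul_div_cancel₀ _ hpos.ne']
  exact (ENNReal.ofReal_le_iff_le_toReal (ne_top_of_le_ne_top hS (ENNReal.le_tsum x))).1
    (ofReal_le_maxLikelihood hP x)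

lemma worstCaseRegret_eq_zero (hS₀ : ∑' x, maxLikelihood Λ ℓ x = 0) (Q : X → ℝ) :
    worstCaseRegret Λ ℓ Q = 0 := by
  refine nonpos_iff_eq_zero.1 (worstCaseRegret_le_iff.2 fun x P hP => ?_)
  have hml : maxLikelihood Λ ℓ x = 0 := ENNReal.tsum_eq_zero.1 hS₀ x
  have hℓ : ℓ P x ≤ 0 :=
    ENNReal.ofReal_eq_zero.1 (le_zero_iff.1 (hml ▸ ofReal_le_maxLikelihood hP x))
  simp [regretTerm, hℓ]

lemma exists_isPmf_worstCaseRegret_le [Nonempty X] (hS : ∑' x, maxLikelihood Λ ℓ x ≠ ⊤) :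
    ∃ Q, IsPmf Q ∧
      worstCaseRegret Λ ℓ Q ≤
        ENNReal.ofReal (logb 2 (∑' x, maxLikelihood Λ ℓ x).toReal) := by
  by_cases hS₀ : ∑' x, maxLikelihood Λ ℓ x = 0
  · classical
    obtain ⟨x₀⟩ := ‹Nonempty X›
    exact ⟨_, isPmf_pi_single_one x₀, (worstCaseRegret_eq_zero hS₀ _).trans_le zero_le⟩
  · exact ⟨normalizedMaxLikelihood Λ ℓ, isPmf_normalizedMaxLikelihood hS hS₀,
      worstCaseRegret_normalizedMaxLikelihood_le hS hS₀⟩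

theorem iInf_worstCaseRegret_eq [Nonempty X] (hS : ∑' x, maxLikelihood Λ ℓ x ≠ ⊤) :
    ⨅ (Q : X → ℝ) (_ : IsPmf Q), worstCaseRegret Λ ℓ Q =
      ENNReal.ofReal (logb 2 (∑' x, maxLikelihood Λ ℓ x).toReal) := by
  obtain ⟨Q, hQ, hle⟩ := exists_isPmf_worstCaseRegret_le hS
  exact le_antisymm ((iInf₂_le Q hQ).trans hle)
    (le_iInf₂ fun _ hQ' => ofReal_logb_tsum_maxLikelihood_le hQ')

theorem iInf_worstCaseRegret_eq_top (hS : ∑' x, maxLikelihood Λ ℓ x = ⊤) :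
    ⨅ (Q : X → ℝ) (_ : IsPmf Q), worstCaseRegret Λ ℓ Q = ⊤ :=
  iInf₂_eq_top.2 fun _ hQ => by_contra fun h => tsum_maxLikelihood_ne_top hQ h hS

end Shtarkov

theorem stmt0_general (Lam : Set (ℕ+ → ℝ))
    (n : ℕ)
    (S : ℝ≥0∞)
    (hS : S = ∑' x : Fin n → ℕ+, ⨆ P ∈ Lam, ENNReal.ofReal (prodPmf P n x)) :
    (minimaxRegret Lam n < ⊤ ↔ S < ⊤) ∧
      (S < ⊤ → minimaxRegret Lam n = ENNReal.ofReal (Real.logb 2 S.toReal)) := by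
  have hmin : minimaxRegret Lam n = ⨅ (Q : (Fin n → ℕ+) → ℝ) (_ : IsPmf Q),
      worstCaseRegret Lam (prodPmf · n) Q := rfl
  change S = ∑' x, maxLikelihood Lam (prodPmf · n) x at hS
  subst hS
  rcases eq_or_ne (∑' x, maxLikelihood Lam (prodPmf · n) x) ⊤ with htop | hfin
  · simp [hmin, iInf_worstCaseRegret_eq_top htop, htop]
  · rw [hmin, iInf_worstCaseRegret_eq hfin]
    simp [hfin.lt_top]

/-- Shtarkov's characterization of minimax regret via the NML sum. -/
theorem stmt0 (Lam : Set (ℕ+ → ℝ)) (hLam : Lam.Nonempty) (hpmf : ∀ P ∈ Lam, IsPmf P)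
    (n : ℕ) (hn : 1 ≤ n)
    (S : ℝ≥0∞)
    (hS : S = ∑' x : Fin n → ℕ+, ⨆ P ∈ Lam, ENNReal.ofReal (prodPmf P n x)) :
    (minimaxRegret Lam n < ⊤ ↔ S < ⊤) ∧
      (S < ⊤ → minimaxRegret Lam n = ENNReal.ofReal (Real.logb 2 S.toReal)) :=
  stmt0_general Lam n S hS
end
end

section
/- Let f : ℕ+ → (0,1) be strictly decreasing with f(1) < 1, and for each k ∈ ℕ+ let p_k be the probability mass function on ℕ with p_k(0) = 1 − f(k), p_k(k) = f(k), and p_k(l) = 0 otherwise; let Λ = {p_k : k ∈ ℕ+}. If f(k)·log k → ∞ as k → ∞, then R+(Λ^n) = ∞ for every positive integer n. -/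
open scoped ENNReal BigOperators

noncomputable section

/-! For any coding distribution `Q`, the masses `Q(k,0,…,0)` are summable, so comparison with the
harmonic series gives `Q(k,0,…,0) ≤ 1/k` for infinitely many `k`. At such `k` the term of
`D(p_kⁿ‖Q)` at `(k,0,…,0)`, where `p_kⁿ` has mass `a = f(k)(1-f(k))ⁿ⁻¹ ≥ (1-f(1))ⁿ⁻¹ f(k)`, is at
least `a log k - O(1)`, which is unbounded because `f(k) log k → ∞`. -/

open Filter Real

theorem frequently_le_inv_of_summable {q : ℕ+ → ℝ} (hq : Summable q) :
    ∃ᶠ k in atTop, q k ≤ (k : ℝ)⁻¹ := by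
  by_contra h
  obtain ⟨N, hN⟩ := eventually_atTop.1 (not_frequently.1 h)
  have hbound : ∀ᶠ k : ℕ+ in cofinite, ‖((k : ℕ) : ℝ)⁻¹‖ ≤ q k := by
    refine eventually_cofinite.2 <| (Set.finite_Iio N).subset fun k hk => ?_
    by_contra hNk
    rw [Set.mem_ofPred_eq, Real.norm_of_nonneg (by positivity)] at hk
    exact hk (not_le.1 (hN k (not_lt.1 hNk))).le
  exact Real.not_summable_natCast_inv <|
    summable_pnat_iff_summable_nat.1 (hq.of_norm_bounded_eventually hbound)

theorem mul_log_sub_one_le {a b t : ℝ} (ha : 0 < a) (hb : 0 < b) (hbt : b ≤ t⁻¹) :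
    a * log t - 1 ≤ a * log (a / b) + b - a := by
  have ht : 0 < t := inv_pos.1 (hb.trans_le hbt)
  have hlog : log (a * t) ≤ log (a / b) :=
    log_le_log (by positivity) <| by
      rw [div_eq_mul_inv]
      exact mul_le_mul_of_nonneg_left ((le_inv_comm₀ hb ht).1 hbt) ha.le
  have hmul_log : a - 1 ≤ a * log a := by
    have h := mul_le_mul_of_nonneg_left (one_sub_inv_le_log_of_pos ha) ha.le
    rwa [mul_sub, mul_one, mul_inv_cancel₀ ha.ne'] at h
  rw [log_mul ha.ne' ht.ne'] at hlog
  linarith [mul_le_mul_of_nonneg_left hlog ha.le, mul_add a (log a) (log t)]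

theorem klDiv2_eq_top_of_eq_zero {α : Type*} {p q : α → ℝ} {x : α} (hq : q x = 0)
    (hp : 0 < p x) : klDiv2 p q = ⊤ := by
  classical
  exact if_pos ⟨x, hq, hp⟩

theorem ofReal_div_log_two_le_klDiv2 {α : Type*} {p q : α → ℝ} (x : α) :
    ENNReal.ofReal ((p x * log (p x / q x) + q x - p x) / log 2) ≤ klDiv2 p q := by
  classical
  unfold klDiv2
  split_ifs
  · exact le_top
  · rw [ENNReal.ofReal_div_of_pos (log_pos one_lt_two)]
    exact ENNReal.div_le_div_right (ENNReal.le_tsum x) _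

theorem ofReal_mul_logb_sub_le_klDiv2 {α : Type*} {p q : α → ℝ} {x : α} {t : ℝ}
    (hp : 0 < p x) (hq : 0 ≤ q x) (hqt : q x ≤ t⁻¹) :
    ENNReal.ofReal (p x * logb 2 t - 1 / log 2) ≤ klDiv2 p q := by
  rcases hq.eq_or_lt with hq0 | hq0
  · rw [klDiv2_eq_top_of_eq_zero hq0.symm hp]; exact le_top
  refine le_trans (ENNReal.ofReal_le_ofReal ?_) (ofReal_div_log_two_le_klDiv2 x)
  rw [logb, mul_div_assoc', ← sub_div]
  exact div_le_div_of_nonneg_right (mul_log_sub_one_le hp hq0 hqt) (log_pos one_lt_two).le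

theorem prodPmf_single {α : Type*} [Zero α] (P : α → ℝ) {n : ℕ} (i : Fin n) (a : α) :
    prodPmf P n (Pi.single i a) = P a * P 0 ^ (n - 1) := by
  classical
  rw [prodPmf, Fintype.prod_eq_mul_prod_compl i, Pi.single_eq_same,
    Finset.prod_congr rfl fun j hj => by
      rw [Pi.single_eq_of_ne (Finset.notMem_singleton.1 (Finset.mem_compl.1 hj))],
    Finset.prod_const, Finset.card_compl, Finset.card_singleton, Fintype.card_fin]

theorem iSup_eq_top_of_frequently_ofReal_le {ι : Type*} {l : Filter ι} {u : ι → ℝ≥0∞}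
    {v : ι → ℝ} (hv : Tendsto v l atTop) (huv : ∃ᶠ i in l, ENNReal.ofReal (v i) ≤ u i) :
    ⨆ i, u i = ⊤ := by
  refine iSup_eq_top.2 fun b hb => ?_
  obtain ⟨i, hvi, hui⟩ := (huv.and_eventually (hv.eventually_gt_atTop b.toReal)).exists
  exact ⟨i, (ENNReal.lt_ofReal_iff_toReal_lt hb.ne).2 hui |>.trans_le hvi⟩

/-- if `f(k) log k → ∞` then the minimax redundancy of the two-point class is infinite. -/
theorem stmt5 (f : ℕ+ → ℝ) (hf0 : ∀ k, 0 < f k) (hf1 : ∀ k, f k < 1) (hanti : StrictAnti f)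
    (p : ℕ+ → ℕ → ℝ)
    (hp : ∀ (k : ℕ+) (l : ℕ),
      p k l = if l = 0 then 1 - f k else if l = (k : ℕ) then f k else 0)
    (Lam : Set (ℕ → ℝ)) (hLam : Lam = Set.range p)
    (hlim : Filter.Tendsto (fun k : ℕ+ => f k * Real.logb 2 (k : ℝ)) Filter.atTop
      Filter.atTop)
    (n : ℕ) (hn : 1 ≤ n) :
    minimaxRedundancy Lam n = ⊤ := by
  subst hLam
  let x : ℕ+ → Fin n → ℕ := fun k => Pi.single ⟨0, hn⟩ (k : ℕ)
  have hc : 0 < (1 - f 1) ^ (n - 1) := pow_pos (sub_pos.2 (hf1 1)) _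
  have hprod : ∀ k, prodPmf (p k) n (x k) = f k * (1 - f k) ^ (n - 1) := fun k => by
    rw [prodPmf_single, hp, hp, if_neg k.ne_zero, if_pos rfl, if_pos rfl]
  refine iInf₂_eq_top.2 fun Q hQ => ?_
  rw [iSup_range]
  refine iSup_eq_top_of_frequently_ofReal_le
    (tendsto_atTop_add_const_right _ (-(1 / log 2)) (hlim.const_mul_atTop hc)) ?_
  have hsum : Summable (Q ∘ x) :=
    hQ.2.summable.comp_injective ((Pi.single_injective _).comp PNat.coe_injective)
  refine (frequently_le_inv_of_summable hsum).mono fun k hk => ?_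
  have hdom : (1 - f 1) ^ (n - 1) * f k ≤ prodPmf (p k) n (x k) := by
    have hfk := hanti.antitone (one_le (a := k))
    have hfk0 := (hf0 k).le
    have hf10 := sub_nonneg.2 (hf1 1).le
    rw [hprod, mul_comm]
    gcongr
  refine le_trans (ENNReal.ofReal_le_ofReal ?_)
    (ofReal_mul_logb_sub_le_klDiv2 (x := x k) ?_ (hQ.1 _) hk)
  · have hlogk := logb_nonneg one_lt_two (Nat.one_le_cast.2 k.pos)
    rw [← mul_assoc, ← sub_eq_add_neg]
    gcongr
  · rw [hprod]
    exact mul_pos (hf0 k) (pow_pos (sub_pos.2 (hf1 k)) _)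
end
end

section
/- Let f : ℕ+ → (0,1) be strictly decreasing with f(1) < 1, and for each k ∈ ℕ+ let p_k be the probability mass function on ℕ with p_k(0) = 1 − f(k), p_k(k) = f(k), and p_k(l) = 0 otherwise; let Λ = {p_k : k ∈ ℕ+}. If the sequence (f(k)·log k)_{k ∈ ℕ+} is bounded, then R+(Λ^n) < ∞ for every positive integer n. -/
open scoped ENNReal BigOperators

noncomputable section

/-!
Code with the product of the inverse-square law `q l = 6 / (π² (l + 1)²)` on `ℕ`. As `Pⁿ ≤ 1`,
`D(Pⁿ‖Qⁿ)` is at most the cross-entropy `∑ₓ Pⁿ(x) (-log Qⁿ(x))` plus a constant, and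
`Pⁿ(x) (-log Qⁿ(x)) = ∑ᵢ Pⁿ(x) (-log q(xᵢ)) ≤ n · supₗ p(l) (-log q(l))` because `Pⁿ(x) ≤ p(xᵢ)`.
For `p = p_k` this supremum is at most a constant plus `2 f(k) log k`, which is bounded in `k`,
and `p_kⁿ` is supported on the `2ⁿ` words over `{0, k}`.
-/

open Real Finset

section ProductPmf

variable {α : Type*}

theorem IsPmf.le_one {q : α → ℝ} (hq : IsPmf q) (a : α) : q a ≤ 1 :=
  le_hasSum hq.2 a fun b _ => hq.1 b

theorem IsPmf.tsum_ofReal_eq_one {q : α → ℝ} (hq : IsPmf q) :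
    ∑' a, ENNReal.ofReal (q a) = 1 := by
  rw [← ENNReal.ofReal_tsum_of_nonneg hq.1 hq.2.summable, hq.2.tsum_eq, ENNReal.ofReal_one]

theorem hasSum_prodPmf {p : α → ℝ} {s : ℝ} (hp : HasSum p s) (hp0 : ∀ a, 0 ≤ p a) (n : ℕ) :
    HasSum (prodPmf p n) (s ^ n) := by
  induction n with
  | zero =>
    convert hasSum_fintype (prodPmf p 0)
    simp [prodPmf]
  | succ n ih =>
    have hprod : HasSum (fun y : α × (Fin n → α) => p y.1 * prodPmf p n y.2) (s * s ^ n) :=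
      hp.mul ih <| hp.summable.mul_of_nonneg ih.summable hp0 fun _ => prod_nonneg fun _ _ => hp0 _
    rw [pow_succ', ← (Fin.consEquiv fun _ => α).hasSum_iff]
    convert hprod using 1
    ext ⟨a, x⟩
    simp [prodPmf, Fin.prod_univ_succ]

theorem isPmf_prodPmf {p : α → ℝ} (hp : IsPmf p) (n : ℕ) : IsPmf (prodPmf p n) :=
  ⟨fun _ => prod_nonneg fun _ _ => hp.1 _, by simpa using hasSum_prodPmf hp.2 hp.1 n⟩

theorem prodPmf_le_apply {p : α → ℝ} (hp0 : ∀ a, 0 ≤ p a) (hp1 : ∀ a, p a ≤ 1) {n : ℕ}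
    (x : Fin n → α) (i : Fin n) : prodPmf p n x ≤ p (x i) := by
  rw [prodPmf, ← mul_prod_erase _ _ (mem_univ i)]
  exact mul_le_of_le_one_right (hp0 _) (prod_le_one (fun _ _ => hp0 _) fun _ _ => hp1 _)

theorem prodPmf_eq_zero_of_notMem_piFinset {p : α → ℝ} {S : Finset α} (hS : ∀ a ∉ S, p a = 0)
    {n : ℕ} {x : Fin n → α} (hx : x ∉ Fintype.piFinset fun _ => S) : prodPmf p n x = 0 := by
  obtain ⟨i, hi⟩ := not_forall.mp (Fintype.mem_piFinset.not.mp hx)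
  exact prod_eq_zero (mem_univ i) (hS _ hi)

theorem prodPmf_mul_neg_log_le {p q : α → ℝ} (hp0 : ∀ a, 0 ≤ p a) (hp1 : ∀ a, p a ≤ 1)
    (hq0 : ∀ a, 0 < q a) (hq1 : ∀ a, q a ≤ 1) {C : ℝ} (hC : ∀ a, p a * -log (q a) ≤ C) {n : ℕ}
    (x : Fin n → α) : prodPmf p n x * -log (prodPmf q n x) ≤ n * C := by
  change prodPmf p n x * -log (∏ i, q (x i)) ≤ _
  rw [log_prod fun _ _ => (hq0 _).ne', ← sum_neg_distrib, mul_sum]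
  calc ∑ i, prodPmf p n x * -log (q (x i))
      ≤ ∑ _i : Fin n, C := sum_le_sum fun i _ =>
        (mul_le_mul_of_nonneg_right (prodPmf_le_apply hp0 hp1 x i)
          (neg_nonneg.mpr (log_nonpos (hq0 _).le (hq1 _)))).trans (hC _)
    _ = n * C := by simp

end ProductPmf

section Divergence

variable {α : Type*}

theorem klDiv2_le_of_mul_neg_log_le {p q : α → ℝ} (hq : IsPmf q) (hq0 : ∀ a, 0 < q a)
    (hp0 : ∀ a, 0 ≤ p a) (hp1 : ∀ a, p a ≤ 1) {S : Finset α} (hS : ∀ a ∉ S, p a = 0) {C : ℝ}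
    (hC : ∀ a, p a * -log (q a) ≤ C) :
    klDiv2 p q ≤ (#S * ENNReal.ofReal C + 1) / ENNReal.ofReal (log 2) := by
  have hdom : ¬∃ a, q a = 0 ∧ 0 < p a := fun ⟨a, ha, _⟩ => (hq0 a).ne' ha
  rw [klDiv2, if_neg hdom]
  gcongr ?_ / _
  -- `p log p ≤ 0` on `[0, 1]`, so each summand is at most the cross-entropy term plus `q`.
  have hterm : ∀ a, ENNReal.ofReal (p a * log (p a / q a) + q a - p a)
      ≤ ENNReal.ofReal (p a * -log (q a)) + ENNReal.ofReal (q a) := fun a => by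
    refine (ENNReal.ofReal_le_ofReal ?_).trans ENNReal.ofReal_add_le
    have hlog : p a * log (p a / q a) ≤ p a * -log (q a) := by
      rcases (hp0 a).eq_or_lt with h | h
      · simp [← h]
      · rw [log_div h.ne' (hq0 a).ne']
        nlinarith [mul_log_nonpos (hp0 a) (hp1 a)]
    linarith [hp0 a]
  calc ∑' a, ENNReal.ofReal (p a * log (p a / q a) + q a - p a)
      ≤ ∑' a, (ENNReal.ofReal (p a * -log (q a)) + ENNReal.ofReal (q a)) :=
        ENNReal.tsum_le_tsum hterm
    _ = ∑ a ∈ S, ENNReal.ofReal (p a * -log (q a)) + 1 := by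
        rw [ENNReal.tsum_add, hq.tsum_ofReal_eq_one, tsum_eq_sum fun a ha => by simp [hS a ha]]
    _ ≤ #S * ENNReal.ofReal C + 1 := by
        gcongr
        rw [← nsmul_eq_mul]
        exact sum_le_card_nsmul _ _ _ fun a _ => ENNReal.ofReal_le_ofReal (hC a)

theorem klDiv2_prodPmf_le {p q : α → ℝ} (hq : IsPmf q) (hq0 : ∀ a, 0 < q a)
    (hp0 : ∀ a, 0 ≤ p a) (hp1 : ∀ a, p a ≤ 1) {S : Finset α} (hS : ∀ a ∉ S, p a = 0) {C : ℝ}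
    (hC : ∀ a, p a * -log (q a) ≤ C) (n : ℕ) :
    klDiv2 (prodPmf p n) (prodPmf q n)
      ≤ (#S ^ n * ENNReal.ofReal (n * C) + 1) / ENNReal.ofReal (log 2) := by
  have h := klDiv2_le_of_mul_neg_log_le (isPmf_prodPmf hq n)
    (fun _ => prod_pos fun _ _ => hq0 _) (fun _ => prod_nonneg fun _ _ => hp0 _)
    (fun _ => prod_le_one (fun _ _ => hp0 _) fun _ _ => hp1 _)
    (fun _ => prodPmf_eq_zero_of_notMem_piFinset hS)
    (prodPmf_mul_neg_log_le hp0 hp1 hq0 hq.le_one hC)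
  rwa [Fintype.card_piFinset, prod_const, card_univ, Fintype.card_fin, Nat.cast_pow] at h

end Divergence

section InverseSquare

def inverseSquarePmf (l : ℕ) : ℝ := 6 / (π ^ 2 * (l + 1) ^ 2)

theorem inverseSquarePmf_pos (l : ℕ) : 0 < inverseSquarePmf l := by
  unfold inverseSquarePmf
  positivity

theorem isPmf_inverseSquarePmf : IsPmf inverseSquarePmf := by
  refine ⟨fun l => (inverseSquarePmf_pos l).le, ?_⟩
  have h := ((hasSum_nat_add_iff' 1).mpr hasSum_zeta_two).mul_left (6 / π ^ 2)
  have hterms : (fun l : ℕ => 6 / π ^ 2 * (1 / ((l + 1 : ℕ) : ℝ) ^ 2)) = inverseSquarePmf := by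
    ext l
    simp only [inverseSquarePmf]
    push_cast
    field_simp
  have hsum : 6 / π ^ 2 * (π ^ 2 / 6 - ∑ i ∈ range 1, 1 / (i : ℝ) ^ 2) = 1 := by
    simp
  rwa [hterms, hsum] at h

theorem neg_log_inverseSquarePmf (l : ℕ) :
    -log (inverseSquarePmf l) = log (π ^ 2 / 6) + 2 * log (l + 1) := by
  rw [inverseSquarePmf, ← log_inv, inv_div, mul_div_right_comm,
    log_mul (by positivity) (by positivity), log_pow]
  push_cast
  ring

end InverseSquare

section TwoPoint

def twoPointPmf (a : ℝ) (k l : ℕ) : ℝ := if l = 0 then 1 - a else if l = k then a else 0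

variable {a : ℝ} {k : ℕ}

theorem twoPointPmf_nonneg (ha0 : 0 ≤ a) (ha1 : a ≤ 1) (l : ℕ) : 0 ≤ twoPointPmf a k l := by
  unfold twoPointPmf
  split_ifs <;> linarith

theorem twoPointPmf_le_one (ha0 : 0 ≤ a) (ha1 : a ≤ 1) (l : ℕ) : twoPointPmf a k l ≤ 1 := by
  unfold twoPointPmf
  split_ifs <;> linarith

theorem twoPointPmf_eq_zero_of_notMem {l : ℕ} (hl : l ∉ ({0, k} : Finset ℕ)) :
    twoPointPmf a k l = 0 := by
  simp only [mem_insert, mem_singleton, not_or] at hl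
  simp [twoPointPmf, hl.1, hl.2]

theorem twoPointPmf_mul_neg_log_le (ha0 : 0 ≤ a) (ha1 : a ≤ 1) (hk : 1 ≤ k) {B : ℝ} (hB0 : 0 ≤ B)
    (hB : a * log k ≤ B) (l : ℕ) :
    twoPointPmf a k l * -log (inverseSquarePmf l) ≤ log (π ^ 2 / 6) + 2 * (log 2 + B) := by
  have hπ : 0 ≤ log (π ^ 2 / 6) :=
    log_nonneg <| by nlinarith [pi_gt_three]
  have h2 : 0 ≤ log 2 := log_nonneg one_le_two
  have hk' : (1 : ℝ) ≤ k := by exact_mod_cast hk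
  have hlog_succ : log (k + 1) ≤ log 2 + log k := by
    rw [← log_mul two_ne_zero (by positivity)]
    exact log_le_log (by positivity) (by linarith)
  rw [neg_log_inverseSquarePmf, twoPointPmf]
  split_ifs with hl0 hlk
  · simp only [hl0, CharP.cast_eq_zero, zero_add, log_one, mul_zero, add_zero]
    nlinarith
  · subst hlk
    nlinarith
  · nlinarith

end TwoPoint

theorem stmt6_general (f : ℕ+ → ℝ) (hf0 : ∀ k, 0 < f k) (hf1 : ∀ k, f k < 1)
    (p : ℕ+ → ℕ → ℝ)
    (hp : ∀ (k : ℕ+) (l : ℕ),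
      p k l = if l = 0 then 1 - f k else if l = (k : ℕ) then f k else 0)
    (Lam : Set (ℕ → ℝ)) (hLam : Lam = Set.range p)
    (hbdd : ∃ B : ℝ, ∀ k : ℕ+, f k * Real.logb 2 (k : ℝ) ≤ B)
    (n : ℕ) :
    minimaxRedundancy Lam n < ⊤ := by
  obtain rfl : p = fun k => twoPointPmf (f k) k := funext fun k => funext (hp k)
  obtain ⟨B, hB⟩ := hbdd
  have hB0 : 0 ≤ B := by simpa using hB 1
  have hB_log (k : ℕ+) : f k * log k ≤ B * log 2 := by
    have := mul_le_mul_of_nonneg_right (hB k) (log_nonneg one_le_two)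
    rwa [logb, mul_div_assoc', div_mul_cancel₀ _ (log_pos one_lt_two).ne'] at this
  set C := log (π ^ 2 / 6) + 2 * (log 2 + B * log 2)
  have hKL (k : ℕ+) : klDiv2 (prodPmf (twoPointPmf (f k) k) n) (prodPmf inverseSquarePmf n)
      ≤ (2 ^ n * ENNReal.ofReal (n * C) + 1) / ENNReal.ofReal (log 2) := by
    have h := klDiv2_prodPmf_le isPmf_inverseSquarePmf inverseSquarePmf_pos
      (twoPointPmf_nonneg (hf0 k).le (hf1 k).le) (twoPointPmf_le_one (hf0 k).le (hf1 k).le)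
      (fun _ => twoPointPmf_eq_zero_of_notMem)
      (twoPointPmf_mul_neg_log_le (hf0 k).le (hf1 k).le k.pos
        (by positivity) (hB_log k)) n
    rwa [card_pair (Nat.ne_of_lt k.pos), Nat.cast_ofNat] at h
  have hM : (2 ^ n * ENNReal.ofReal (n * C) + 1) / ENNReal.ofReal (log 2) < ⊤ :=
    ENNReal.div_lt_top (by finiteness) (ENNReal.ofReal_pos.mpr (log_pos one_lt_two)).ne'
  subst hLam
  refine (iInf₂_le _ (isPmf_prodPmf isPmf_inverseSquarePmf n)).trans_lt <|
    (iSup₂_le ?_).trans_lt hM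
  rintro _ ⟨k, rfl⟩
  exact hKL k

/-- if `(f(k) log k)_k` is bounded then the minimax redundancy of the
two-point class is finite for every `n`. -/
theorem stmt6 (f : ℕ+ → ℝ) (hf0 : ∀ k, 0 < f k) (hf1 : ∀ k, f k < 1) (hanti : StrictAnti f)
    (p : ℕ+ → ℕ → ℝ)
    (hp : ∀ (k : ℕ+) (l : ℕ),
      p k l = if l = 0 then 1 - f k else if l = (k : ℕ) then f k else 0)
    (Lam : Set (ℕ → ℝ)) (hLam : Lam = Set.range p)
    (hbdd : ∃ B : ℝ, ∀ k : ℕ+, f k * Real.logb 2 (k : ℝ) ≤ B)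
    (n : ℕ) (hn : 1 ≤ n) :
    minimaxRedundancy Lam n < ⊤ :=
  stmt6_general f hf0 hf1 p hp Lam hLam hbdd n
end
end

section
/- Let α > 1 and let p be a probability mass function on ℕ+ for which there exist k₀ ∈ ℕ+ and constants c, C > 0 such that c/k^α ≤ p(k) ≤ C/k^α for all k ≥ k₀. For n ≥ 1, let E[Z_n] denote the expected number of distinct symbols among n i.i.d. draws from p, i.e. E[Z_n] = Σ_{k ∈ ℕ+} (1 − (1 − p(k))^n). Then there exist constants c₁, c₂ > 0 such that for all positive integers n, c₁·n^{1/α} ≤ E[Z_n] ≤ c₂·n^{1/α}. -/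
open scoped ENNReal BigOperators

noncomputable section

/-!
Symbol `k` contributes `1 - (1 - p k) ^ n`, which is at most `min 1 (n * p k)` and at least
`1 / 2` once `p k ≥ 1 / n` (as `(1 - 1 / n) ^ n ≤ e⁻¹`). Cutting at `K ≈ n ^ (1 / α)`, the head
contributes at most `K` and, by the integral test, the tail at most
`n * C * K ^ (1 - α) / (α - 1) ≈ n ^ (1 / α)`. Conversely every `k` with `k0 ≤ k ≤ (c n) ^ (1 / α)`
has `p k ≥ 1 / n`, which gives `≳ n ^ (1 / α)` symbols contributing `1 / 2` each for large `n`;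
for small `n` the term of `k0` alone is a positive lower bound.
-/

open Filter

section Bernoulli

variable {x : ℝ}

lemma one_sub_one_sub_pow_nonneg (hx0 : 0 ≤ x) (hx1 : x ≤ 1) (n : ℕ) : 0 ≤ 1 - (1 - x) ^ n :=
  sub_nonneg.2 (pow_le_one₀ (by linarith) (by linarith))

lemma one_sub_one_sub_pow_le_one (hx1 : x ≤ 1) (n : ℕ) : 1 - (1 - x) ^ n ≤ 1 :=
  sub_le_self _ (pow_nonneg (by linarith) n)

lemma one_sub_one_sub_pow_le_mul (hx : x ≤ 2) (n : ℕ) : 1 - (1 - x) ^ n ≤ n * x := by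
  have := one_add_mul_le_pow (show (-2 : ℝ) ≤ -x by linarith) n
  rw [← sub_eq_add_neg] at this
  linarith

lemma le_one_sub_one_sub_pow (hx0 : 0 ≤ x) (hx1 : x ≤ 1) {n : ℕ} (hn : n ≠ 0) :
    x ≤ 1 - (1 - x) ^ n := by
  have := pow_le_of_le_one (by linarith : 0 ≤ 1 - x) (by linarith) hn
  linarith

lemma half_le_one_sub_one_sub_pow {n : ℕ} (hn : n ≠ 0) (hx : 1 / n ≤ x) (hx1 : x ≤ 1) :
    1 / 2 ≤ 1 - (1 - x) ^ n := by
  have hexp : Real.exp (-1) ≤ 1 / 2 := by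
    rw [Real.exp_neg, one_div]
    exact inv_anti₀ two_pos (by linarith [Real.add_one_le_exp 1])
  have hmono : (1 - x) ^ n ≤ (1 - 1 / n) ^ n := pow_le_pow_left₀ (by linarith) (by linarith) n
  have := Real.one_sub_div_pow_le_exp_neg (n := n) (t := 1)
    (by exact_mod_cast Nat.one_le_iff_ne_zero.2 hn)
  linarith

end Bernoulli

lemma tsum_rpow_neg_nat_add_le {a : ℝ} (ha : 1 < a) {K : ℕ} (hK : 0 < K) :
    ∑' i : ℕ, ((i + K + 1 : ℕ) : ℝ) ^ (-a) ≤ (K : ℝ) ^ (1 - a) / (a - 1) := by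
  have hK' : (0 : ℝ) < K := by exact_mod_cast hK
  have anti : AntitoneOn (fun x : ℝ => x ^ (-a)) (Set.Ici (K : ℝ)) := fun x hx y _ hxy =>
    Real.rpow_le_rpow_of_nonpos (hK'.trans_le hx) hxy (by linarith)
  calc ∑' i : ℕ, ((i + K + 1 : ℕ) : ℝ) ^ (-a)
      ≤ ∫ x in Set.Ioi (K : ℝ), x ^ (-a) :=
        anti.tsum_comp_add_le_integral K (integrableOn_Ioi_rpow_of_lt (by linarith) hK')
          fun x hx => Real.rpow_nonneg (hK'.trans hx).le _
    _ = (K : ℝ) ^ (1 - a) / (a - 1) := by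
        rw [integral_Ioi_rpow_of_lt (by linarith) hK', show -a + 1 = -(a - 1) by ring,
          neg_div_neg_eq, neg_sub]

lemma exists_forall_mul_rpow_le_of_eventually {f : ℕ → ℝ} {β a b : ℝ} (hβ : 0 ≤ β) (ha : 0 < a)
    (hb : 0 < b) (hfa : ∀ n : ℕ, 1 ≤ n → a ≤ f n) (hfb : ∀ᶠ n : ℕ in atTop, b * (n : ℝ) ^ β ≤ f n) :
    ∃ c : ℝ, 0 < c ∧ ∀ n : ℕ, 1 ≤ n → c * (n : ℝ) ^ β ≤ f n := by
  obtain ⟨N, hN⟩ := eventually_atTop.1 hfb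
  refine ⟨min b (a / ((N : ℝ) + 1) ^ β), by positivity, fun n hn => ?_⟩
  rcases le_or_gt N n with hNn | hnN
  · calc min b (a / ((N : ℝ) + 1) ^ β) * (n : ℝ) ^ β ≤ b * (n : ℝ) ^ β := by
          gcongr; exact min_le_left _ _
      _ ≤ f n := hN n hNn
  · calc min b (a / ((N : ℝ) + 1) ^ β) * (n : ℝ) ^ β
        ≤ a / ((N : ℝ) + 1) ^ β * ((N : ℝ) + 1) ^ β := by
          gcongr
          · exact min_le_right _ _
          · exact_mod_cast hnN.le.trans (Nat.le_succ N)
      _ = a := div_mul_cancel₀ a (by positivity)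
      _ ≤ f n := hfa n hn

/-- `E[Z_n]` for `n` i.i.d. draws from `p`, by linearity of expectation. -/
def expectedDistinct {α : Type*} (p : α → ℝ) (n : ℕ) : ℝ := ∑' a, (1 - (1 - p a) ^ n)

namespace IsPmf

section

variable {α : Type*} {p : α → ℝ}

lemma le_one_s16 (hp : IsPmf p) (a : α) : p a ≤ 1 := le_hasSum hp.2 a fun b _ => hp.1 b

lemma one_sub_one_sub_pow_nonneg (hp : IsPmf p) (n : ℕ) (a : α) : 0 ≤ 1 - (1 - p a) ^ n :=
  _root_.one_sub_one_sub_pow_nonneg (hp.1 a) (hp.le_one_s16 a) n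

lemma summable_one_sub_one_sub_pow (hp : IsPmf p) (n : ℕ) :
    Summable fun a => 1 - (1 - p a) ^ n :=
  Summable.of_nonneg_of_le (hp.one_sub_one_sub_pow_nonneg n)
    (fun a => one_sub_one_sub_pow_le_mul (by linarith [hp.le_one_s16 a]) n)
    (hp.2.summable.mul_left (n : ℝ))

lemma le_expectedDistinct (hp : IsPmf p) {n : ℕ} (hn : n ≠ 0) (a : α) :
    p a ≤ expectedDistinct p n :=
  (le_one_sub_one_sub_pow (hp.1 a) (hp.le_one_s16 a) hn).trans <|
    (hp.summable_one_sub_one_sub_pow n).le_tsum a fun b _ => hp.one_sub_one_sub_pow_nonneg n b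

lemma card_div_two_le_expectedDistinct (hp : IsPmf p) {n : ℕ} (hn : n ≠ 0) (s : Finset α)
    (hs : ∀ a ∈ s, 1 / n ≤ p a) : (s.card : ℝ) / 2 ≤ expectedDistinct p n :=
  calc (s.card : ℝ) / 2 = ∑ _a ∈ s, (1 / 2 : ℝ) := by simp [div_eq_mul_inv]
    _ ≤ ∑ a ∈ s, (1 - (1 - p a) ^ n) :=
        Finset.sum_le_sum fun a ha => half_le_one_sub_one_sub_pow hn (hs a ha) (hp.le_one_s16 a)
    _ ≤ expectedDistinct p n :=
        (hp.summable_one_sub_one_sub_pow n).sum_le_tsum s fun a _ =>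
          hp.one_sub_one_sub_pow_nonneg n a

end

section

variable {p : ℕ+ → ℝ} {k0 : ℕ+} {a : ℝ}

lemma expectedDistinct_le_of_cutoff (hp : IsPmf p) {C : ℝ} (ha : 1 < a) (hC : 0 ≤ C)
    (hub : ∀ k : ℕ+, k0 ≤ k → p k ≤ C / (k : ℝ) ^ a) (n : ℕ) {K : ℕ} (hK : 0 < K)
    (hk0K : (k0 : ℕ) ≤ K + 1) :
    expectedDistinct p n ≤ K + n * C * ((K : ℝ) ^ (1 - a) / (a - 1)) := by
  set F : ℕ+ → ℝ := fun k => 1 - (1 - p k) ^ n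
  have hF : Summable fun i : ℕ => F i.succPNat :=
    Equiv.pnatEquivNat.symm.summable_iff.2 (hp.summable_one_sub_one_sub_pow n)
  have hhead : ∑ i ∈ Finset.range K, F i.succPNat ≤ K := by
    refine (Finset.sum_le_card_nsmul _ _ 1 fun i _ => ?_).trans (by simp)
    exact one_sub_one_sub_pow_le_one (hp.le_one_s16 _) n
  have htail (i : ℕ) : F (i + K).succPNat ≤ n * C * ((i + K + 1 : ℕ) : ℝ) ^ (-a) := by
    have hk0 : k0 ≤ (i + K).succPNat := by
      rw [← PNat.coe_le_coe, Nat.succPNat_coe]; omega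
    have hpos : (0 : ℝ) < (i + K + 1 : ℕ) := by positivity
    calc F (i + K).succPNat ≤ n * p (i + K).succPNat :=
          one_sub_one_sub_pow_le_mul (by linarith [hp.le_one_s16 (i + K).succPNat]) n
      _ ≤ n * (C / ((i + K + 1 : ℕ) : ℝ) ^ a) := by gcongr; exact hub _ hk0
      _ = n * C * ((i + K + 1 : ℕ) : ℝ) ^ (-a) := by rw [Real.rpow_neg hpos.le]; ring
  have hsum : Summable fun i : ℕ => ((i + K + 1 : ℕ) : ℝ) ^ (-a) := by
    simpa only [← add_assoc] using (summable_nat_add_iff (f := fun m : ℕ => (m : ℝ) ^ (-a))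
      (K + 1)).2 (Real.summable_nat_rpow.2 (by linarith))
  calc expectedDistinct p n = ∑ i ∈ Finset.range K, F i.succPNat + ∑' i, F (i + K).succPNat :=
        (Equiv.pnatEquivNat.symm.tsum_eq F).symm.trans (hF.sum_add_tsum_nat_add K).symm
    _ ≤ K + ∑' i : ℕ, n * C * ((i + K + 1 : ℕ) : ℝ) ^ (-a) :=
        add_le_add hhead <|
          (hF.comp_injective (add_left_injective K)).tsum_le_tsum htail (hsum.mul_left _)
    _ ≤ K + n * C * ((K : ℝ) ^ (1 - a) / (a - 1)) := by
        rw [tsum_mul_left]; gcongr; exact tsum_rpow_neg_nat_add_le ha hK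

lemma exists_expectedDistinct_le_mul_rpow (hp : IsPmf p) {C : ℝ} (ha : 1 < a) (hC : 0 ≤ C)
    (hub : ∀ k : ℕ+, k0 ≤ k → p k ≤ C / (k : ℝ) ^ a) :
    ∃ c₂ : ℝ, 0 < c₂ ∧ ∀ n : ℕ, 1 ≤ n → expectedDistinct p n ≤ c₂ * (n : ℝ) ^ (1 / a) := by
  refine ⟨k0 + 2 + C / (a - 1), add_pos_of_pos_of_nonneg (by positivity)
    (div_nonneg hC (by linarith)), fun n hn => ?_⟩
  have hn' : (1 : ℝ) ≤ n := by exact_mod_cast hn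
  have hnβ : 1 ≤ (n : ℝ) ^ (1 / a) := Real.one_le_rpow hn' (by positivity)
  set K := (k0 : ℕ) + ⌈(n : ℝ) ^ (1 / a)⌉₊
  have hnK : (n : ℝ) ^ (1 / a) ≤ K := by
    simpa [K] using (Nat.le_ceil _).trans (le_add_of_nonneg_left (Nat.cast_nonneg (k0 : ℕ)))
  have hK : (K : ℝ) ≤ (k0 + 2) * (n : ℝ) ^ (1 / a) := by
    have hceil := Nat.ceil_lt_add_one (zero_le_one.trans hnβ)
    have hk0 : (1 : ℝ) ≤ k0 := Nat.one_le_cast.2 k0.pos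
    simp only [K, Nat.cast_add]
    nlinarith
  have htail : n * (K : ℝ) ^ (1 - a) ≤ (n : ℝ) ^ (1 / a) := calc
    n * (K : ℝ) ^ (1 - a) ≤ n * ((n : ℝ) ^ (1 / a)) ^ (1 - a) :=
      mul_le_mul_of_nonneg_left
        (Real.rpow_le_rpow_of_nonpos (zero_lt_one.trans_le hnβ) hnK (by linarith)) (by positivity)
    _ = (n : ℝ) ^ (1 / a) := by
      rw [← Real.rpow_mul (by positivity), show 1 / a * (1 - a) = 1 / a - 1 by field_simp,
        Real.rpow_sub_one (by positivity), mul_div_cancel₀ _ (by positivity)]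
  calc expectedDistinct p n ≤ K + n * C * ((K : ℝ) ^ (1 - a) / (a - 1)) :=
        hp.expectedDistinct_le_of_cutoff ha hC hub n (by positivity) (by omega)
    _ = K + C / (a - 1) * (n * (K : ℝ) ^ (1 - a)) := by ring
    _ ≤ (k0 + 2) * (n : ℝ) ^ (1 / a) + C / (a - 1) * (n : ℝ) ^ (1 / a) := by gcongr
    _ = (k0 + 2 + C / (a - 1)) * (n : ℝ) ^ (1 / a) := by ring

lemma eventually_mul_rpow_le_expectedDistinct (hp : IsPmf p) {c : ℝ} (ha : 0 < a) (hc : 0 < c)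
    (hlb : ∀ k : ℕ+, k0 ≤ k → c / (k : ℝ) ^ a ≤ p k) :
    ∀ᶠ n : ℕ in atTop, c ^ (1 / a) / 4 * (n : ℝ) ^ (1 / a) ≤ expectedDistinct p n := by
  have hlim : Tendsto (fun n : ℕ => (c * n) ^ (1 / a)) atTop atTop :=
    (tendsto_rpow_atTop (by positivity)).comp (tendsto_natCast_atTop_atTop.const_mul_atTop hc)
  filter_upwards [hlim.eventually_ge_atTop (2 * k0), eventually_ne_atTop 0] with n hn hn0
  have hK : 2 * (k0 : ℕ) ≤ ⌊(c * n) ^ (1 / a)⌋₊ := Nat.le_floor (by exact_mod_cast hn)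
  obtain ⟨K, hKfloor⟩ : ∃ K : ℕ+, (K : ℕ) = ⌊(c * n) ^ (1 / a)⌋₊ :=
    ⟨⟨⌊(c * n) ^ (1 / a)⌋₊, by have := k0.pos; omega⟩, rfl⟩
  have hS : ∀ k ∈ Finset.Icc k0 K, 1 / (n : ℝ) ≤ p k := by
    intro k hk
    rw [Finset.mem_Icc, ← PNat.coe_le_coe] at hk
    have hkK : (k : ℝ) ≤ (c * n) ^ (1 / a) :=
      (Nat.cast_le.2 (hKfloor ▸ hk.2)).trans (Nat.floor_le (by positivity))
    rw [one_div a, Real.le_rpow_inv_iff_of_pos (by positivity) (by positivity) ha] at hkK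
    calc 1 / (n : ℝ) = c / (c * n) := by field_simp
      _ ≤ c / (k : ℝ) ^ a := by gcongr
      _ ≤ p k := hlb k hk.1
  have hcard : (c * n) ^ (1 / a) / 2 ≤ (Finset.Icc k0 K).card := by
    have hfloor := Nat.lt_floor_add_one ((c * n) ^ (1 / a))
    rw [PNat.card_Icc, Nat.cast_sub (by omega), hKfloor]
    push_cast
    linarith
  calc c ^ (1 / a) / 4 * (n : ℝ) ^ (1 / a) = (c * n) ^ (1 / a) / 2 / 2 := by
        rw [Real.mul_rpow hc.le (by positivity)]; ring
    _ ≤ (Finset.Icc k0 K).card / 2 := by gcongr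
    _ ≤ expectedDistinct p n := hp.card_div_two_le_expectedDistinct hn0 _ hS

end

end IsPmf

/-- the expected number of distinct symbols is of order `n^{1/α}`. -/
theorem stmt16 (alpha : ℝ) (halpha : 1 < alpha) (p : ℕ+ → ℝ) (hp : IsPmf p)
    (k0 : ℕ+) (c C : ℝ) (hc : 0 < c) (hC : 0 < C)
    (hbound : ∀ k : ℕ+, k0 ≤ k →
      c / (k : ℝ) ^ alpha ≤ p k ∧ p k ≤ C / (k : ℝ) ^ alpha) :
    ∃ c₁ c₂ : ℝ, 0 < c₁ ∧ 0 < c₂ ∧ ∀ n : ℕ, 1 ≤ n →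
      c₁ * (n : ℝ) ^ (1 / alpha) ≤ (∑' k : ℕ+, (1 - (1 - p k) ^ n)) ∧
      (∑' k : ℕ+, (1 - (1 - p k) ^ n)) ≤ c₂ * (n : ℝ) ^ (1 / alpha) := by
  have halpha0 : 0 < alpha := by linarith
  have hpk0 : 0 < p k0 := lt_of_lt_of_le (by positivity) (hbound k0 le_rfl).1
  obtain ⟨c₁, hc₁, hlower⟩ := exists_forall_mul_rpow_le_of_eventually (f := expectedDistinct p)
    (by positivity) hpk0 (by positivity) (fun n hn => hp.le_expectedDistinct (by omega) k0)
    (hp.eventually_mul_rpow_le_expectedDistinct halpha0 hc fun k hk => (hbound k hk).1)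
  obtain ⟨c₂, hc₂, hupper⟩ :=
    hp.exists_expectedDistinct_le_mul_rpow halpha hC.le fun k hk => (hbound k hk).2
  exact ⟨c₁, c₂, hc₁, hc₂, fun n hn => ⟨hlower n hn, hupper n hn⟩⟩
end
end
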